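/- arXiv:2010.06941 — 3 statements merged into one kernel-verified Lean document; each statement's English description precedes it below -/
import Mathlib

section
/- Let 0 = w_0 < w_1 < … < w_m = 1 and set p_ℓ = w_ℓ − w_{ℓ-1}. Let Ψ_X and Ψ_Y be piecewise-linear quantile functions with these common breakpoints, with centers (c_{Xℓ})_{ℓ=1}^m, (c_{Yℓ})_{ℓ=1}^m and half-ranges (r_{Xℓ})_{ℓ=1}^m, (r_{Yℓ})_{ℓ=1}^m (half-ranges nonnegative). Then ∫₀¹ (Ψ_X(t) − Ψ_Y(t))² dt = ∑_{ℓ=1}^m p_ℓ·[(c_{Xℓ} − c_{Yℓ})² + (1/3)·(r_{Xℓ} − r_{Yℓ})²]. -/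
/-!
On each piece `[w (ℓ-1), w ℓ)` the difference `Ψ_X − Ψ_Y` is again the affine function of the
same shape, with center `c_{Xℓ} − c_{Yℓ}` and half-range `r_{Xℓ} − r_{Yℓ}`. The affine change of
variables from the piece onto `[-1, 1]` turns the integral of the square of such a function into
`p_ℓ / 2 · ∫_{-1}^{1} (C + sR)² ds = p_ℓ (C² + R²/3)`, and integrals over adjacent pieces add up.
-/

open Set intervalIntegral

/-- `Ψ` is the piecewise-linear quantile function with breakpoints
`0 = w 0 < w 1 < … < w m = 1`, centers `c 1, …, c m` and half-ranges `r 1, …, r m`: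
on the piece `[w (ℓ-1), w ℓ)` (for `ℓ < m`), and on `[w (m-1), 1]` for the last piece,
`Ψ t = c ℓ + (2(t − w (ℓ-1))/(w ℓ − w (ℓ-1)) − 1) · r ℓ`. -/
def IsPWQuantile (m : ℕ) (w : ℕ → ℝ) (c r : ℕ → ℝ) (Ψ : ℝ → ℝ) : Prop :=
  (∀ ℓ, 1 ≤ ℓ → ℓ < m → ∀ t ∈ Set.Ico (w (ℓ - 1)) (w ℓ),
      Ψ t = c ℓ + (2 * (t - w (ℓ - 1)) / (w ℓ - w (ℓ - 1)) - 1) * r ℓ) ∧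
  (∀ t ∈ Set.Icc (w (m - 1)) 1,
      Ψ t = c m + (2 * (t - w (m - 1)) / (w m - w (m - 1)) - 1) * r m)

lemma integral_neg_one_one_sq_add_mul (C R : ℝ) :
    ∫ s in (-1 : ℝ)..1, (C + s * R) ^ 2 = 2 * (C ^ 2 + R ^ 2 / 3) := by
  have hexpand : ∀ s : ℝ, (C + s * R) ^ 2 = C ^ 2 + 2 * C * R * s + R ^ 2 * s ^ 2 :=
    fun s => by ring
  simp only [hexpand]
  rw [integral_add, integral_add, integral_const_mul, integral_const_mul, integral_id,
    integral_pow, integral_const]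
  · norm_num
    ring
  all_goals exact Continuous.intervalIntegrable (by fun_prop) _ _

lemma integral_sq_affine_rescale {a b : ℝ} (hab : a < b) (C R : ℝ) :
    ∫ t in a..b, (C + (2 * (t - a) / (b - a) - 1) * R) ^ 2 = (b - a) * (C ^ 2 + R ^ 2 / 3) := by
  have hba : b - a ≠ 0 := sub_ne_zero.mpr hab.ne'
  set k := 2 / (b - a) with hk_def
  have hk : k ≠ 0 := div_ne_zero two_ne_zero hba
  have hlin : ∀ t, 2 * (t - a) / (b - a) - 1 = k * t + (-(k * a) - 1) := fun t => by
    rw [hk_def]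
    field_simp
    ring
  have hleft : k * a + (-(k * a) - 1) = -1 := by ring
  have hright : k * b + (-(k * a) - 1) = 1 := by
    rw [hk_def]
    field_simp
    ring
  simp only [hlin]
  rw [integral_comp_mul_add (fun s => (C + s * R) ^ 2) hk, hleft, hright,
    integral_neg_one_one_sq_add_mul, smul_eq_mul, hk_def]
  field_simp

lemma Finset.sum_Icc_one_eq_sum_range {M : Type*} [AddCommMonoid M] (m : ℕ) (g : ℕ → M) :
    ∑ ℓ ∈ Finset.Icc 1 m, g ℓ = ∑ k ∈ Finset.range m, g (k + 1) := by
  rw [Finset.range_eq_Ico, Finset.sum_Ico_add' g, zero_add, Finset.Ico_add_one_right_eq_Icc]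

namespace IsPWQuantile

variable {m : ℕ} {w c r : ℕ → ℝ} {Ψ : ℝ → ℝ}

lemma sub {c' r' : ℕ → ℝ} {Ψ' : ℝ → ℝ} (h : IsPWQuantile m w c r Ψ)
    (h' : IsPWQuantile m w c' r' Ψ') : IsPWQuantile m w (c - c') (r - r') (Ψ - Ψ') := by
  refine ⟨fun ℓ hℓ hℓm t ht => ?_, fun t ht => ?_⟩
  · simp only [Pi.sub_apply, h.1 ℓ hℓ hℓm t ht, h'.1 ℓ hℓ hℓm t ht]
    ring
  · simp only [Pi.sub_apply, h.2 t ht, h'.2 t ht]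
    ring

lemma eqOn_Ico (h : IsPWQuantile m w c r Ψ) (hwm : w m = 1) {k : ℕ} (hk : k < m) :
    EqOn Ψ (fun t => c (k + 1) + (2 * (t - w k) / (w (k + 1) - w k) - 1) * r (k + 1))
      (Ico (w k) (w (k + 1))) := by
  intro t ht
  rcases (Nat.succ_le_of_lt hk).lt_or_eq with hlt | rfl
  · simpa using h.1 (k + 1) le_add_self hlt t (by simpa using ht)
  · have ht' : t ∈ Icc (w (k + 1 - 1)) 1 := ⟨by simpa using ht.1, hwm ▸ ht.2.le⟩
    simpa using h.2 t ht'

lemma eqOn_Ioo_sq (h : IsPWQuantile m w c r Ψ) (hwm : w m = 1) {k : ℕ} (hk : k < m) :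
    EqOn (fun t => (c (k + 1) + (2 * (t - w k) / (w (k + 1) - w k) - 1) * r (k + 1)) ^ 2)
      (fun t => Ψ t ^ 2) (Ioo (w k) (w (k + 1))) :=
  fun t ht => by dsimp only; rw [h.eqOn_Ico hwm hk (Ioo_subset_Ico_self ht)]

lemma intervalIntegrable_sq (h : IsPWQuantile m w c r Ψ) (hwm : w m = 1) {k : ℕ} (hk : k < m)
    (hlt : w k < w (k + 1)) :
    IntervalIntegrable (fun t => Ψ t ^ 2) MeasureTheory.volume (w k) (w (k + 1)) := by
  have hcont : Continuous fun t =>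
      (c (k + 1) + (2 * (t - w k) / (w (k + 1) - w k) - 1) * r (k + 1)) ^ 2 := by
    fun_prop
  exact (hcont.intervalIntegrable _ _).congr_uIoo (uIoo_of_le hlt.le ▸ h.eqOn_Ioo_sq hwm hk)

lemma integral_sq_piece (h : IsPWQuantile m w c r Ψ) (hwm : w m = 1) {k : ℕ} (hk : k < m)
    (hlt : w k < w (k + 1)) :
    ∫ t in w k..w (k + 1), Ψ t ^ 2 = (w (k + 1) - w k) * (c (k + 1) ^ 2 + r (k + 1) ^ 2 / 3) := by
  rw [← integral_sq_affine_rescale hlt]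
  exact (integral_congr_Ioo_of_le hlt.le (h.eqOn_Ioo_sq hwm hk)).symm

lemma integral_sq (h : IsPWQuantile m w c r Ψ) (hw0 : w 0 = 0) (hwm : w m = 1)
    (hmono : ∀ ℓ < m, w ℓ < w (ℓ + 1)) :
    ∫ t in (0 : ℝ)..1, Ψ t ^ 2 =
      ∑ ℓ ∈ Finset.Icc 1 m, (w ℓ - w (ℓ - 1)) * (c ℓ ^ 2 + r ℓ ^ 2 / 3) := by
  have hsum := sum_integral_adjacent_intervals (a := w)
    fun k hk => h.intervalIntegrable_sq hwm hk (hmono k hk)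
  rw [hw0, hwm] at hsum
  rw [← hsum, Finset.sum_Icc_one_eq_sum_range]
  refine Finset.sum_congr rfl fun k hk => ?_
  rw [Finset.mem_range] at hk
  simpa using h.integral_sq_piece hwm hk (hmono k hk)

end IsPWQuantile

theorem mallows_distance_formula_general (m : ℕ) (w : ℕ → ℝ)
    (hw0 : w 0 = 0) (hwm : w m = 1) (hmono : ∀ ℓ < m, w ℓ < w (ℓ + 1))
    (cX rX cY rY : ℕ → ℝ)
    (ΨX ΨY : ℝ → ℝ)
    (hX : IsPWQuantile m w cX rX ΨX) (hY : IsPWQuantile m w cY rY ΨY) :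
    ∫ t in (0:ℝ)..1, (ΨX t - ΨY t) ^ 2 =
      ∑ ℓ ∈ Finset.Icc 1 m,
        (w ℓ - w (ℓ - 1)) * ((cX ℓ - cY ℓ) ^ 2 + (1 / 3) * (rX ℓ - rY ℓ) ^ 2) := by
  calc ∫ t in (0:ℝ)..1, (ΨX t - ΨY t) ^ 2 = ∫ t in (0:ℝ)..1, (ΨX - ΨY) t ^ 2 := rfl
    _ = _ := (hX.sub hY).integral_sq hw0 hwm hmono
    _ = _ := Finset.sum_congr rfl fun ℓ _ => by simp only [Pi.sub_apply]; ring

/-- The squared Mallows distance between two piecewise-linear quantile functions with common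
breakpoints: `∫₀¹ (Ψ_X − Ψ_Y)² = ∑_ℓ p_ℓ [(c_{Xℓ} − c_{Yℓ})² + (1/3)(r_{Xℓ} − r_{Yℓ})²]`,
where `p_ℓ = w_ℓ − w_{ℓ-1}`. -/
theorem mallows_distance_formula (m : ℕ) (hm : 1 ≤ m) (w : ℕ → ℝ)
    (hw0 : w 0 = 0) (hwm : w m = 1) (hmono : ∀ ℓ < m, w ℓ < w (ℓ + 1))
    (cX rX cY rY : ℕ → ℝ) (hrX : ∀ ℓ, 0 ≤ rX ℓ) (hrY : ∀ ℓ, 0 ≤ rY ℓ)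
    (ΨX ΨY : ℝ → ℝ)
    (hX : IsPWQuantile m w cX rX ΨX) (hY : IsPWQuantile m w cY rY ΨY) :
    ∫ t in (0:ℝ)..1, (ΨX t - ΨY t) ^ 2 =
      ∑ ℓ ∈ Finset.Icc 1 m,
        (w ℓ - w (ℓ - 1)) * ((cX ℓ - cY ℓ) ^ 2 + (1 / 3) * (rX ℓ - rY ℓ) ^ 2) :=
  mallows_distance_formula_general m w hw0 hwm hmono cX rX cY rY ΨX ΨY hX hY
end

section
/- Let f_{ij} ∈ L²([0,1], ℝ) for i = 1, …, n and j = 1, …, p, and assume each reflected function t ↦ f_{ij}(1−t) also lies in L²([0,1], ℝ). For γ = (a_1, b_1, …, a_p, b_p) ∈ ℝ^{2p}, define the score S_i(γ)(t) = ∑_{j=1}^p a_j·f_{ij}(t) − ∑_{j=1}^p b_j·f_{ij}(1−t) and the barycentric score S̄(γ) = (1/n)·∑_{i=1}^n S_i(γ). For each i define g_{i,2j−1}(t) = f_{ij}(t) − (1/n)·∑_{k=1}^n f_{kj}(t) and g_{i,2j}(t) = −f_{ij}(1−t) + (1/n)·∑_{k=1}^n f_{kj}(1−t), and let T be the 2p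 × 2p symmetric matrix with entries T_{hq} = ∑_{i=1}^n ⟨g_{i,h}, g_{i,q}⟩_{L²}. Then for every γ ∈ ℝ^{2p}, ∑_{i=1}^n D_M²(S_i(γ), S̄(γ)) = γᵀ T γ; i.e. the sum of squared Mallows distances between the scores and the barycentric score is a quadratic form in the weight vector with the total sums-of-squares-and-cross-products matrix T. -/
/-!
Subtracting the barycentre is linear, so `S_i(γ) − S̄(γ) = ∑_h γ_h g_{i,h}` pointwise: the
centred score is the `γ`-combination of the centred (and, for the `b`-coordinates, reflected and
negated) functions. Its squared `L²` norm is therefore `γᵀ G_i γ` with `G_i` the Gram matrix of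
`(g_{i,h})_h`, and `T = ∑_i G_i`.
-/

open MeasureTheory Matrix

/-- The Lebesgue measure restricted to the interval `[0,1]`. -/
noncomputable def μ01 : Measure ℝ := volume.restrict (Set.Icc (0:ℝ) 1)

/-- Squared Mallows distance between two functions, as elements of `L²([0,1],ℝ)`. -/
noncomputable def DM2f (f g : ℝ → ℝ) : ℝ := ∫ t, (f t - g t) ^ 2 ∂μ01

theorem sum_mul_sub_mul_sum_sum {R ι κ : Type*} [CommRing R] [Fintype ι] [Fintype κ]
    (c : ι → R) (x : κ → ι → R) (m : R) (i : κ) :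
    ∑ h, c h * x i h - m * ∑ k, ∑ h, c h * x k h = ∑ h, c h * (x i h - m * ∑ k, x k h) := by
  simp only [mul_sub, Finset.sum_sub_distrib, Finset.mul_sum]
  rw [Finset.sum_comm]
  congr 1
  exact Finset.sum_congr rfl fun h _ => Finset.sum_congr rfl fun k _ => by ring

noncomputable def l2Gram {α ι : Type*} [MeasurableSpace α] (μ : Measure α) (u : ι → α → ℝ) :
    Matrix ι ι ℝ :=
  Matrix.of fun h q => ∫ t, u h t * u q t ∂μ

theorem integral_sq_sum_mul_eq_dotProduct_l2Gram {α ι : Type*} [MeasurableSpace α] [Fintype ι]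
    {μ : Measure α} {u : ι → α → ℝ} (hu : ∀ h, MemLp (u h) 2 μ) (c : ι → ℝ) :
    ∫ t, (∑ h, c h * u h t) ^ 2 ∂μ = c ⬝ᵥ l2Gram μ u *ᵥ c := by
  have hint : ∀ h q, Integrable (fun t => c h * c q * (u h t * u q t)) μ :=
    fun h q => ((hu h).integrable_mul (hu q)).const_mul _
  have hexpand : ∀ t, (∑ h, c h * u h t) ^ 2 = ∑ h, ∑ q, c h * c q * (u h t * u q t) := by
    intro t
    rw [sq, Finset.sum_mul_sum]
    exact Finset.sum_congr rfl fun h _ => Finset.sum_congr rfl fun q _ => by ring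
  simp_rw [hexpand]
  rw [integral_finsetSum _ fun h _ => integrable_finsetSum _ fun q _ => hint h q]
  simp only [dotProduct, mulVec, l2Gram, of_apply, Finset.mul_sum]
  refine Finset.sum_congr rfl fun h _ => ?_
  rw [integral_finsetSum _ fun q _ => hint h q]
  refine Finset.sum_congr rfl fun q _ => ?_
  rw [integral_const_mul]
  ring

/-- The sum of squared Mallows distances between the discriminant scores
`S_i(γ)(t) = ∑ⱼ aⱼ f_{ij}(t) − ∑ⱼ bⱼ f_{ij}(1−t)` and the barycentric score
`S̄(γ) = (1/n) ∑ᵢ S_i(γ)` is the quadratic form `γᵀ T γ`, where `T` is the total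
sums-of-squares-and-cross-products matrix of the centered functions
`g_{i,2j−1}(t) = f_{ij}(t) − (1/n)∑ₖ f_{kj}(t)` and
`g_{i,2j}(t) = −f_{ij}(1−t) + (1/n)∑ₖ f_{kj}(1−t)`
(here the odd coordinates are indexed by `Sum.inl j` and the even ones by `Sum.inr j`). -/
theorem score_inertia_is_quadratic_form (n p : ℕ)
    (f : Fin n → Fin p → ℝ → ℝ)
    (hf : ∀ i j, MemLp (f i j) 2 μ01)
    (hf' : ∀ i j, MemLp (fun t => f i j (1 - t)) 2 μ01)
    (a b : Fin p → ℝ)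
    (S : Fin n → ℝ → ℝ)
    (hS : ∀ i, ∀ t : ℝ, S i t = ∑ j, a j * f i j t - ∑ j, b j * f i j (1 - t))
    (Sbar : ℝ → ℝ) (hSbar : ∀ t : ℝ, Sbar t = (n : ℝ)⁻¹ * ∑ i, S i t)
    (g : Fin n → (Fin p ⊕ Fin p) → ℝ → ℝ)
    (hg1 : ∀ i j, ∀ t : ℝ, g i (Sum.inl j) t = f i j t - (n : ℝ)⁻¹ * ∑ k, f k j t)
    (hg2 : ∀ i j, ∀ t : ℝ,
      g i (Sum.inr j) t = -(f i j (1 - t)) + (n : ℝ)⁻¹ * ∑ k, f k j (1 - t))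
    (T : Matrix (Fin p ⊕ Fin p) (Fin p ⊕ Fin p) ℝ)
    (hT : ∀ h q, T h q = ∑ i, ∫ t, g i h t * g i q t ∂μ01)
    (γ : Fin p ⊕ Fin p → ℝ)
    (hγ : ∀ j, γ (Sum.inl j) = a j ∧ γ (Sum.inr j) = b j) :
    ∑ i, DM2f (S i) Sbar = γ ⬝ᵥ T.mulVec γ := by
  let Y : Fin n → Fin p ⊕ Fin p → ℝ → ℝ :=
    fun i => Sum.elim (fun j t => f i j t) (fun j t => -f i j (1 - t))
  have hSY : ∀ i t, S i t = ∑ h, γ h * Y i h t := by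
    simp [Y, hS, Fintype.sum_sum_type, hγ, sub_eq_add_neg]
  have hgY : ∀ i h t, g i h t = Y i h t - (n : ℝ)⁻¹ * ∑ k, Y k h t := by
    rintro i (j | j) t
    · simp [Y, hg1]
    · simp [Y, hg2, Finset.sum_neg_distrib, sub_eq_add_neg]
  have hg : ∀ i h, MemLp (g i h) 2 μ01 := by
    have hY : ∀ i h, MemLp (Y i h) 2 μ01 := by
      rintro i (j | j)
      exacts [hf i j, (hf' i j).neg]
    intro i h
    rw [show g i h = _ from funext (hgY i h)]
    exact (hY i h).sub ((memLp_finsetSum _ fun k _ => hY k h).const_mul _)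
  have hcentre : ∀ i t, S i t - Sbar t = ∑ h, γ h * g i h t := by
    intro i t
    simp only [hSbar, hSY, hgY]
    exact sum_mul_sub_mul_sum_sum γ (fun k h => Y k h t) _ i
  have hT_sum : T = ∑ i, l2Gram μ01 (g i) := by
    ext h q
    simp [hT, l2Gram, Matrix.sum_apply]
  calc ∑ i, DM2f (S i) Sbar = ∑ i, γ ⬝ᵥ l2Gram μ01 (g i) *ᵥ γ := by
        refine Finset.sum_congr rfl fun i _ => ?_
        simp only [DM2f, hcentre]
        exact integral_sq_sum_mul_eq_dotProduct_l2Gram (hg i) γ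
    _ = γ ⬝ᵥ T *ᵥ γ := by rw [hT_sum, sum_mulVec, dotProduct_sum]
end

section
/- (Completely positive reformulation of the constrained fractional quadratic problem.) Let B and W be symmetric d × d real matrices such that γᵀWγ > 0 for every entrywise-nonnegative γ ∈ ℝ^d with γ ≠ 0. Then sup { γᵀBγ : γ ∈ ℝ^d, γ ≥ 0 entrywise, γᵀWγ = 1 } = sup { trace(B·Γ) : Γ completely positive, trace(W·Γ) = 1 }, where a symmetric d × d matrix Γ is completely positive if Γ = Y·Yᵀ for some d × k real matrix Y with all entries nonnegative (for some k ≥ 1). -/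
open Matrix

/-- A symmetric `d × d` real matrix is completely positive if it factors as `Y * Yᵀ` for some
entrywise-nonnegative `d × k` real matrix `Y` (for some `k ≥ 1`). -/
def CompletelyPositive {d : ℕ} (Γ : Matrix (Fin d) (Fin d) ℝ) : Prop :=
  ∃ k : ℕ, 1 ≤ k ∧ ∃ Y : Matrix (Fin d) (Fin k) ℝ,
    (∀ i j, 0 ≤ Y i j) ∧ Γ = Y * Yᵀ

/-!
Writing `Γ = Y Yᵀ` with nonnegative columns `y₁, …, y_k`, the objective and the constraint
become `∑ yₗᵀ B yₗ` and `∑ yₗᵀ W yₗ = 1`. Each nonzero column, rescaled to `yᵀ W y = 1`, is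
feasible for the vector problem, so `yₗᵀ B yₗ ≤ M · yₗᵀ W yₗ` for every upper bound `M` of the
vector problem, and summing gives `trace (B Γ) ≤ M`. Conversely every feasible `γ` gives the
rank-one matrix `γ γᵀ`. Hence both value sets have the same upper bounds, and so the same
supremum (including the junk cases of an empty or unbounded set).
-/

theorem Real.sSup_eq_of_upperBounds_eq {s t : Set ℝ} (h : upperBounds s = upperBounds t) :
    sSup s = sSup t := by
  have of_isLUB : ∀ {s t : Set ℝ}, upperBounds s = upperBounds t → s.Nonempty → BddAbove s →
      sSup t = sSup s := by
    intro s t h hs hbdd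
    have ht : t.Nonempty := by
      by_contra ht
      rw [Set.not_nonempty_iff_eq_empty.1 ht, upperBounds_empty] at h
      obtain ⟨x, hx⟩ := hs
      have : x - 1 ∈ upperBounds s := h ▸ Set.mem_univ _
      linarith [this hx]
    exact ((isLUB_congr h).1 (Real.isLUB_sSup hs hbdd)).csSup_eq ht
  by_cases hs : s.Nonempty ∧ BddAbove s
  · exact (of_isLUB h hs.1 hs.2).symm
  by_cases ht : t.Nonempty ∧ BddAbove t
  · exact of_isLUB h.symm ht.1 ht.2
  rw [Real.sSup_def, dif_neg hs, Real.sSup_def, dif_neg ht]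

theorem Matrix.trace_mul_mul_transpose {m n R : Type*} [Fintype m] [Fintype n] [CommSemiring R]
    (M : Matrix m m R) (Y : Matrix m n R) :
    (M * (Y * Yᵀ)).trace = ∑ l, Yᵀ l ⬝ᵥ M *ᵥ Yᵀ l := by
  rw [← Matrix.mul_assoc, Matrix.trace_mul_comm, ← Matrix.mul_assoc]
  refine Finset.sum_congr rfl fun l _ => ?_
  simp only [Matrix.diag, Matrix.mul_apply, dotProduct, mulVec, Matrix.transpose_apply,
    Finset.mul_sum, Finset.sum_mul]
  rw [Finset.sum_comm]
  exact Finset.sum_congr rfl fun i _ => Finset.sum_congr rfl fun j _ => by ring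

section FractionalQuadratic

variable {d : ℕ} (B W : Matrix (Fin d) (Fin d) ℝ)

def fractionalQuadraticValues : Set ℝ :=
  {x : ℝ | ∃ γ : Fin d → ℝ, (∀ h, 0 ≤ γ h) ∧ γ ⬝ᵥ W.mulVec γ = 1 ∧ x = γ ⬝ᵥ B.mulVec γ}

def completelyPositiveValues : Set ℝ :=
  {x : ℝ | ∃ Γ : Matrix (Fin d) (Fin d) ℝ, CompletelyPositive Γ ∧
    (W * Γ).trace = 1 ∧ x = (B * Γ).trace}

theorem div_mem_fractionalQuadraticValues {v : Fin d → ℝ} (hv : ∀ i, 0 ≤ v i)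
    (hvW : 0 < v ⬝ᵥ W *ᵥ v) :
    (v ⬝ᵥ B *ᵥ v) / (v ⬝ᵥ W *ᵥ v) ∈ fractionalQuadraticValues B W := by
  set c := (√(v ⬝ᵥ W *ᵥ v))⁻¹
  have hc : c * c = (v ⬝ᵥ W *ᵥ v)⁻¹ := by
    rw [← mul_inv, Real.mul_self_sqrt hvW.le]
  refine ⟨c • v, fun i => mul_nonneg (by positivity) (hv i), ?_, ?_⟩
  · simp only [mulVec_smul, smul_dotProduct, dotProduct_smul, smul_eq_mul, ← mul_assoc, hc]
    exact inv_mul_cancel₀ hvW.ne'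
  · simp only [mulVec_smul, smul_dotProduct, dotProduct_smul, smul_eq_mul, ← mul_assoc, hc]
    exact div_eq_inv_mul _ _

theorem quadratic_le_of_mem_upperBounds_fractionalQuadraticValues
    (hWpos : ∀ γ : Fin d → ℝ, (∀ h, 0 ≤ γ h) → γ ≠ 0 → 0 < γ ⬝ᵥ W *ᵥ γ)
    {M : ℝ} (hM : M ∈ upperBounds (fractionalQuadraticValues B W))
    {v : Fin d → ℝ} (hv : ∀ i, 0 ≤ v i) :
    v ⬝ᵥ B *ᵥ v ≤ M * (v ⬝ᵥ W *ᵥ v) := by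
  rcases eq_or_ne v 0 with rfl | hv0
  · simp
  have hvW := hWpos v hv hv0
  rw [← div_le_iff₀ hvW]
  exact hM (div_mem_fractionalQuadraticValues B W hv hvW)

theorem fractionalQuadraticValues_subset_completelyPositiveValues :
    fractionalQuadraticValues B W ⊆ completelyPositiveValues B W := by
  rintro x ⟨γ, hγ, hγW, rfl⟩
  refine ⟨replicateCol (Fin 1) γ * (replicateCol (Fin 1) γ)ᵀ,
    ⟨1, le_rfl, _, fun i _ => hγ i, rfl⟩, ?_, ?_⟩ <;>
  rw [trace_mul_mul_transpose, Fin.sum_univ_one]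
  exacts [hγW, rfl]

theorem upperBounds_fractionalQuadraticValues_subset
    (hWpos : ∀ γ : Fin d → ℝ, (∀ h, 0 ≤ γ h) → γ ≠ 0 → 0 < γ ⬝ᵥ W *ᵥ γ) :
    upperBounds (fractionalQuadraticValues B W) ⊆ upperBounds (completelyPositiveValues B W) := by
  rintro M hM x ⟨Γ, ⟨k, -, Y, hY, rfl⟩, hWΓ, rfl⟩
  rw [trace_mul_mul_transpose] at hWΓ ⊢
  calc ∑ l, Yᵀ l ⬝ᵥ B *ᵥ Yᵀ l
      ≤ ∑ l, M * (Yᵀ l ⬝ᵥ W *ᵥ Yᵀ l) := Finset.sum_le_sum fun l _ =>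
        quadratic_le_of_mem_upperBounds_fractionalQuadraticValues B W hWpos hM fun i => hY i l
    _ = M := by rw [← Finset.mul_sum, hWΓ, mul_one]

theorem upperBounds_fractionalQuadraticValues
    (hWpos : ∀ γ : Fin d → ℝ, (∀ h, 0 ≤ γ h) → γ ≠ 0 → 0 < γ ⬝ᵥ W *ᵥ γ) :
    upperBounds (fractionalQuadraticValues B W) = upperBounds (completelyPositiveValues B W) :=
  (upperBounds_fractionalQuadraticValues_subset B W hWpos).antisymm
    (upperBounds_mono_set (fractionalQuadraticValues_subset_completelyPositiveValues B W))

end FractionalQuadratic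

theorem completely_positive_reformulation_general (d : ℕ)
    (B W : Matrix (Fin d) (Fin d) ℝ)
    (hWpos : ∀ γ : Fin d → ℝ, (∀ h, 0 ≤ γ h) → γ ≠ 0 → 0 < γ ⬝ᵥ W.mulVec γ) :
    sSup {x : ℝ | ∃ γ : Fin d → ℝ, (∀ h, 0 ≤ γ h) ∧ γ ⬝ᵥ W.mulVec γ = 1 ∧
        x = γ ⬝ᵥ B.mulVec γ} =
    sSup {x : ℝ | ∃ Γ : Matrix (Fin d) (Fin d) ℝ, CompletelyPositive Γ ∧
        (W * Γ).trace = 1 ∧ x = (B * Γ).trace} :=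
  Real.sSup_eq_of_upperBounds_eq (upperBounds_fractionalQuadraticValues B W hWpos)

/-- Completely positive reformulation of the constrained fractional quadratic problem:
if `γᵀWγ > 0` on the nonzero nonnegative orthant, then
`sup { γᵀBγ : γ ≥ 0, γᵀWγ = 1 } = sup { trace(BΓ) : Γ completely positive, trace(WΓ) = 1 }`. -/
theorem completely_positive_reformulation (d : ℕ)
    (B W : Matrix (Fin d) (Fin d) ℝ) (hB : B.IsSymm) (hW : W.IsSymm)
    (hWpos : ∀ γ : Fin d → ℝ, (∀ h, 0 ≤ γ h) → γ ≠ 0 → 0 < γ ⬝ᵥ W.mulVec γ) :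
    sSup {x : ℝ | ∃ γ : Fin d → ℝ, (∀ h, 0 ≤ γ h) ∧ γ ⬝ᵥ W.mulVec γ = 1 ∧
        x = γ ⬝ᵥ B.mulVec γ} =
    sSup {x : ℝ | ∃ Γ : Matrix (Fin d) (Fin d) ℝ, CompletelyPositive Γ ∧
        (W * Γ).trace = 1 ∧ x = (B * Γ).trace} :=
  completely_positive_reformulation_general d B W hWpos
end
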